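/- Let n be a natural number and r1, r2, a, b, c ∈ ℝ^n, with r1 i ≠ 0 for every coordinate i. If r1 ⊗ a + r2 = b, r1 ⊗ b + r2 = c, and r1 ⊗ a + r2 = c, then a = b and b = c (the three entity embeddings collapse to a single point). -/
import Mathlib

theorem stmt_10 (n : ℕ) (r1 r2 a b c : Fin n → ℝ)
    (hr1 : ∀ i, r1 i ≠ 0)
    (hab : r1 * a + r2 = b) (hbc : r1 * b + r2 = c) (hac : r1 * a + r2 = c) :
    a = b ∧ b = c := by
  have hbc' : b = c := hab ▸ hac
  have hab' : a = b := by
    funext i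
    have h1 := congrFun hbc (i)
    have h2 := congrFun hac i
    simp [Pi.add_apply, Pi.mul_apply, hbc'] at h1 h2
    have : r1 i * c i = r1 i * a i := by linarith
    rw [show b i = c i from congrFun hbc' i]
    exact (mul_left_cancel₀ (hr1 i) this).symm
  exact ⟨hab', hbc'⟩
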